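/- arXiv:1108.2745 — 4 statements merged into one kernel-verified Lean document; each statement's English description precedes it below -/
import Mathlib

section
/- For H in (0,1)∪(1,2) and s,t ≥ 0, one has (1-H)(s^{2H} + t^{2H} - (1/2)((s+t)^{2H} + |t-s|^{2H})) = C(H) ∫_ℝ (1-cos(sx))(1-cos(tx)) / |x|^{1+2H} dx, where C(H) is a positive constant depending only on H. -/
/-!
Put `g_a(x) = (1 - cos (a x)) - a² (1 - cos x)` and `D(a) = ∫ g_a(x) / |x|^p` with `p = 1 + 2H`.
Since `g_{al}(x) = g_a(l x) + a² g_l(x)`, substituting `x ↦ l x` gives the functional equation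
`D(a l) = l^(p-1) D(a) + a² D(l)`; comparing `D(2a)` computed in both orders forces
`D(a) = c (a^(2H) - a²)` with `c = D(2) / (2^(2H) - 4)`, and `D(2) < 0` because
`g_2(x) = -8 sin⁴(x/2)`. Finally `(1 - cos sx)(1 - cos tx) = g_s + g_t - (g_{s+t} + g_{t-s}) / 2`,
in which the `a²` terms cancel, so the integral equals `c` times the bracket on the left-hand side.
-/

open MeasureTheory Real Set

lemma integrable_comp_abs_of_integrableOn_Ioi {E : Type*} [NormedAddCommGroup E] {f : ℝ → E}
    (hf : IntegrableOn f (Ioi 0)) : Integrable fun x => f |x| := by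
  have hpos : IntegrableOn (fun x => f |x|) (Ioi 0) :=
    hf.congr_fun (fun x hx => by rw [abs_of_pos hx]) measurableSet_Ioi
  have hneg : IntegrableOn (fun x => f |x|) (Iio 0) := by
    rw [← (Measure.measurePreserving_neg volume).integrableOn_comp_preimage
      (Homeomorph.neg ℝ).measurableEmbedding]
    simpa [Function.comp_def] using hpos
  rw [← integrableOn_univ, ← Iio_union_Ici (a := (0 : ℝ))]
  exact hneg.union ((integrableOn_Ici_iff_integrableOn_Ioi).mpr hpos)

lemma integrableOn_Ioi_min_rpow {a b : ℝ} (ha : -1 < a) (hb : b < -1) :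
    IntegrableOn (fun y : ℝ => min (y ^ a) (y ^ b)) (Ioi 0) := by
  have hmeas : AEStronglyMeasurable (fun y : ℝ => min (y ^ a) (y ^ b)) := by fun_prop
  have hnorm : ∀ y ∈ Ioi (0 : ℝ), ‖min (y ^ a) (y ^ b)‖ = min (y ^ a) (y ^ b) :=
    fun y hy => norm_of_nonneg (le_min (rpow_nonneg (le_of_lt hy) a) (rpow_nonneg (le_of_lt hy) b))
  have hnear : IntegrableOn (fun y : ℝ => min (y ^ a) (y ^ b)) (Ioc 0 1) := by
    refine Integrable.mono' ((intervalIntegrable_iff_integrableOn_Ioc_of_le zero_le_one).mp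
      (intervalIntegral.intervalIntegrable_rpow' ha)) hmeas.restrict ?_
    refine ae_restrict_of_forall_mem measurableSet_Ioc fun y hy => ?_
    rw [hnorm y hy.1]
    exact min_le_left _ _
  have hfar : IntegrableOn (fun y : ℝ => min (y ^ a) (y ^ b)) (Ioi 1) := by
    refine Integrable.mono' (integrableOn_Ioi_rpow_of_lt hb one_pos) hmeas.restrict ?_
    refine ae_restrict_of_forall_mem measurableSet_Ioi fun y hy => ?_
    rw [hnorm y (zero_lt_one.trans (mem_Ioi.mp hy))]
    exact min_le_right _ _
  simpa [Ioc_union_Ioi_eq_Ioi zero_le_one] using hnear.union hfar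

lemma integrable_div_abs_rpow_of_abs_le {f : ℝ → ℝ} {p q M : ℝ} (hp : 1 < p)
    (hpq : p < q + 1) (hf : AEStronglyMeasurable f) (hM : ∀ x, |f x| ≤ M * min (|x| ^ q) 1) :
    Integrable fun x => f x / |x| ^ p := by
  have hdom : Integrable fun x : ℝ => M * min (|x| ^ (q - p)) (|x| ^ (-p)) :=
    (integrable_comp_abs_of_integrableOn_Ioi
      (integrableOn_Ioi_min_rpow (by linarith) (by linarith))).const_mul M
  have hden : Measurable fun x : ℝ => |x| ^ p := by fun_prop
  refine hdom.mono' (hf.div₀ hden.aestronglyMeasurable) ?_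
  filter_upwards [Measure.ae_ne volume 0] with x hx
  have hxp : 0 < |x| ^ p := rpow_pos_of_pos (abs_pos.mpr hx) p
  rw [norm_eq_abs, abs_div, abs_of_pos hxp, rpow_sub (abs_pos.mpr hx), rpow_neg (abs_nonneg x),
    ← one_div, min_div_div_right hxp.le, ← mul_div_assoc, div_le_div_iff_of_pos_right hxp]
  exact hM x

lemma integral_comp_mul_left_div_abs_rpow (f : ℝ → ℝ) (p : ℝ) {l : ℝ} (hl : 0 < l) :
    ∫ x, f (l * x) / |x| ^ p = l ^ (p - 1) * ∫ x, f x / |x| ^ p := by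
  have hlp : l ^ p ≠ 0 := (rpow_pos_of_pos hl p).ne'
  have hscale : ∀ x, f (l * x) / |x| ^ p = l ^ p * (f (l * x) / |l * x| ^ p) := fun x => by
    rw [abs_mul, abs_of_pos hl, mul_rpow hl.le (abs_nonneg x)]
    field_simp
  simp_rw [hscale]
  rw [integral_const_mul, Measure.integral_comp_mul_left (fun y => f y / |y| ^ p), smul_eq_mul,
    abs_of_pos (inv_pos.mpr hl), rpow_sub_one hl.ne', div_eq_mul_inv, mul_assoc]

lemma abs_cos_sub_one_sub_sq_div_two_le (y : ℝ) : |cos y - (1 - y ^ 2 / 2)| ≤ y ^ 4 / 2 := by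
  rcases le_or_gt |y| 1 with hy | hy
  · calc |cos y - (1 - y ^ 2 / 2)| ≤ |y| ^ 4 * (5 / 96) := cos_bound hy
      _ ≤ y ^ 4 / 2 := by
        rw [pow_abs, abs_of_nonneg (by positivity)]
        nlinarith [pow_two_nonneg (y ^ 2)]
  · have hy2 : 1 ≤ y ^ 2 := by nlinarith [abs_mul_abs_self y, abs_nonneg y]
    rw [abs_of_nonneg (by linarith [one_sub_sq_div_two_le_cos (x := y)])]
    nlinarith [cos_le_one y]

/-- Subtracting `a² (1 - cos x)` cancels the `x²` term of `1 - cos (a x)` at `0`, so the quotient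
by `|x| ^ p` is integrable for all `1 < p < 5` and not only for `p < 3`. -/
noncomputable def renormCos (a x : ℝ) : ℝ := 1 - cos (a * x) - a ^ 2 * (1 - cos x)

noncomputable def renormCosIntegral (p a : ℝ) : ℝ := ∫ x, renormCos a x / |x| ^ p

lemma abs_renormCos_le (a x : ℝ) :
    |renormCos a x| ≤ (a ^ 4 + 3 * a ^ 2 + 2) * min (|x| ^ 4) 1 := by
  rcases le_or_gt |x| 1 with hx | hx
  · have hx4 : |x| ^ 4 = x ^ 4 := by rw [pow_abs, abs_of_nonneg (by positivity)]
    have htaylor : renormCos a x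
        = -(cos (a * x) - (1 - (a * x) ^ 2 / 2)) + a ^ 2 * (cos x - (1 - x ^ 2 / 2)) := by
      unfold renormCos; ring
    rw [min_eq_left (pow_le_one₀ (abs_nonneg x) hx), hx4, htaylor]
    calc _ ≤ |cos (a * x) - (1 - (a * x) ^ 2 / 2)| + a ^ 2 * |cos x - (1 - x ^ 2 / 2)| := by
          refine (abs_add_le _ _).trans_eq ?_
          rw [abs_neg, abs_mul, abs_of_nonneg (sq_nonneg a)]
      _ ≤ (a * x) ^ 4 / 2 + a ^ 2 * (x ^ 4 / 2) := by
          gcongr <;> exact abs_cos_sub_one_sub_sq_div_two_le _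
      _ ≤ _ := by nlinarith [pow_two_nonneg (x ^ 2), pow_two_nonneg a, pow_two_nonneg (a ^ 2)]
  · rw [min_eq_right (one_le_pow₀ hx.le), mul_one, renormCos, abs_le]
    constructor <;> nlinarith [cos_le_one (a * x), neg_one_le_cos (a * x), cos_le_one x,
      neg_one_le_cos x, pow_two_nonneg a, pow_two_nonneg (a ^ 2)]

lemma renormCos_apply_mul (a l x : ℝ) :
    renormCos a (l * x) = renormCos (a * l) x - a ^ 2 * renormCos l x := by
  simp only [renormCos, ← mul_assoc]; ring

lemma renormCos_neg (a : ℝ) : renormCos (-a) = renormCos a := by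
  ext x; simp only [renormCos, neg_mul, cos_neg, neg_sq]

lemma renormCos_abs (a : ℝ) : renormCos |a| = renormCos a := by
  rcases abs_choice a with h | h <;> rw [h]; exact renormCos_neg a

lemma renormCos_two (x : ℝ) : renormCos 2 x = -8 * sin (x / 2) ^ 4 := by
  have hx : cos x = 1 - 2 * sin (x / 2) ^ 2 := by
    have h := cos_two_mul (x / 2)
    rw [mul_div_cancel₀ x two_ne_zero] at h
    linear_combination h + 2 * sin_sq_add_cos_sq (x / 2)
  rw [renormCos, cos_two_mul, hx]; ring

lemma one_sub_cos_mul_one_sub_cos (s t x : ℝ) :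
    (1 - cos (s * x)) * (1 - cos (t * x))
      = renormCos s x + renormCos t x - (renormCos (s + t) x + renormCos (t - s) x) / 2 := by
  simp only [renormCos, add_mul, sub_mul, cos_add, cos_sub]; ring

lemma two_rpow_sub_four_mul_eq_of_map_mul {D : ℝ → ℝ} {r : ℝ} (hr : r ≠ 0)
    (hD : ∀ a l, 0 < l → D (a * l) = l ^ r * D a + a ^ 2 * D l) {a : ℝ} (ha : 0 ≤ a) :
    (2 ^ r - 4) * D a = D 2 * (a ^ r - a ^ 2) := by
  rcases ha.eq_or_lt with rfl | ha
  · have h0 := hD 0 2 two_pos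
    have h2r : (2 : ℝ) ^ r ≠ 1 := by
      rw [← rpow_zero 2, Ne, rpow_right_inj two_pos (by norm_num)]; exact hr
    have hD0 : D 0 = 0 := by
      rw [zero_mul, zero_pow two_ne_zero, zero_mul, add_zero] at h0
      exact (mul_eq_zero.mp (by linear_combination -h0 : (2 ^ r - 1) * D 0 = 0)).resolve_left
        (sub_ne_zero.mpr h2r)
    rw [hD0, zero_rpow hr]; ring
  · have h2a := hD 2 a ha
    rw [mul_comm] at h2a
    linear_combination h2a - hD a 2 two_pos

section Integral

variable {p : ℝ}

lemma integrable_renormCos_div (hp1 : 1 < p) (hp5 : p < 5) (a : ℝ) :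
    Integrable fun x => renormCos a x / |x| ^ p :=
  integrable_div_abs_rpow_of_abs_le (q := 4) hp1 (by linarith)
    (by unfold renormCos; fun_prop) fun x => by
      rw [rpow_ofNat]; exact abs_renormCos_le a x

lemma renormCosIntegral_mul (hp1 : 1 < p) (hp5 : p < 5) (a : ℝ) {l : ℝ} (hl : 0 < l) :
    renormCosIntegral p (a * l) = l ^ (p - 1) * renormCosIntegral p a
      + a ^ 2 * renormCosIntegral p l := by
  have h := integral_comp_mul_left_div_abs_rpow (renormCos a) p hl
  simp_rw [renormCos_apply_mul, sub_div, mul_div_assoc] at h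
  rw [integral_sub (integrable_renormCos_div hp1 hp5 _)
    ((integrable_renormCos_div hp1 hp5 _).const_mul _), integral_const_mul] at h
  unfold renormCosIntegral
  linarith

lemma renormCosIntegral_two_neg (hp1 : 1 < p) (hp5 : p < 5) : renormCosIntegral p 2 < 0 := by
  have hint := (integrable_renormCos_div hp1 hp5 2).neg
  have hnonneg : 0 ≤ fun x => -(renormCos 2 x / |x| ^ p) := fun x => by
    show 0 ≤ -(renormCos 2 x / |x| ^ p)
    rw [renormCos_two, neg_mul, neg_div, neg_neg]; positivity
  have hsupp : Ioo 0 π ⊆ Function.support fun x => -(renormCos 2 x / |x| ^ p) := fun x hx => by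
    have hsin : 0 < sin (x / 2) :=
      sin_pos_of_pos_of_lt_pi (by linarith [hx.1]) (by linarith [hx.2, pi_pos])
    rw [Function.mem_support, renormCos_two, neg_mul, neg_div, neg_neg]
    exact (div_pos (by positivity) (rpow_pos_of_pos (abs_pos.mpr hx.1.ne') p)).ne'
  have hpos := (integral_pos_iff_support_of_nonneg hnonneg hint).mpr
    ((measure_mono hsupp).trans_lt' (by simp [pi_pos]))
  rw [integral_neg] at hpos
  exact neg_pos.mp hpos

lemma integral_one_sub_cos_mul_one_sub_cos_div (hp1 : 1 < p) (hp5 : p < 5) (s t : ℝ) :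
    ∫ x, (1 - cos (s * x)) * (1 - cos (t * x)) / |x| ^ p
      = renormCosIntegral p s + renormCosIntegral p t
        - (renormCosIntegral p (s + t) + renormCosIntegral p |t - s|) / 2 := by
  have hint := integrable_renormCos_div hp1 hp5
  have hsplit : ∀ x, (1 - cos (s * x)) * (1 - cos (t * x)) / |x| ^ p
      = renormCos s x / |x| ^ p + renormCos t x / |x| ^ p
        - (renormCos (s + t) x / |x| ^ p + renormCos |t - s| x / |x| ^ p) / 2 := fun x => by
    rw [one_sub_cos_mul_one_sub_cos, renormCos_abs]; ring
  simp_rw [hsplit]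
  rw [integral_sub ((hint s).fun_add (hint t)) (((hint _).fun_add (hint _)).div_const 2),
    integral_add (hint s) (hint t), integral_div, integral_add (hint _) (hint _)]
  rfl

lemma two_rpow_sub_four_mul_integral_one_sub_cos_mul_one_sub_cos_div (hp1 : 1 < p) (hp5 : p < 5)
    {s t : ℝ} (hs : 0 ≤ s) (ht : 0 ≤ t) :
    (2 ^ (p - 1) - 4) * ∫ x, (1 - cos (s * x)) * (1 - cos (t * x)) / |x| ^ p
      = renormCosIntegral p 2
        * (s ^ (p - 1) + t ^ (p - 1) - ((s + t) ^ (p - 1) + |t - s| ^ (p - 1)) / 2) := by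
  have hD {a : ℝ} (ha : 0 ≤ a) := two_rpow_sub_four_mul_eq_of_map_mul (D := renormCosIntegral p)
    (by linarith : p - 1 ≠ 0) (fun a _ hl => renormCosIntegral_mul hp1 hp5 a hl) ha
  rw [integral_one_sub_cos_mul_one_sub_cos_div hp1 hp5]
  linear_combination hD hs + hD ht - (hD (add_nonneg hs ht) + hD (abs_nonneg (t - s))) / 2
    + renormCosIntegral p 2 / 2 * sq_abs (t - s)

end Integral

lemma one_sub_mul_two_rpow_two_mul_sub_four_neg {H : ℝ} (hH : H ≠ 1) :
    (1 - H) * (2 ^ (2 * H) - 4) < 0 := by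
  have h4 : (4 : ℝ) = 2 ^ (2 : ℝ) := by norm_num
  rcases hH.lt_or_gt with h | h
  · refine mul_neg_of_pos_of_neg (by linarith) (sub_neg.mpr ?_)
    rw [h4, rpow_lt_rpow_left_iff one_lt_two]; linarith
  · refine mul_neg_of_neg_of_pos (by linarith) (sub_pos.mpr ?_)
    rw [h4, rpow_lt_rpow_left_iff one_lt_two]; linarith

theorem stmt0 (H : ℝ) (hH : H ∈ Set.Ioo (0:ℝ) 1 ∨ H ∈ Set.Ioo (1:ℝ) 2) :
    ∃ C : ℝ, 0 < C ∧ ∀ s t : ℝ, 0 ≤ s → 0 ≤ t →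
      (1 - H) * (s ^ (2*H) + t ^ (2*H)
          - (1/2) * ((s + t) ^ (2*H) + |t - s| ^ (2*H)))
        = C * ∫ x : ℝ, (1 - Real.cos (s*x)) * (1 - Real.cos (t*x)) / |x| ^ (1 + 2*H) := by
  obtain ⟨hH0, hH2, hH1⟩ : 0 < H ∧ H < 2 ∧ H ≠ 1 := by
    rcases hH with ⟨h0, h1⟩ | ⟨h0, h1⟩
    exacts [⟨h0, by linarith, h1.ne⟩, ⟨by linarith, h1, h0.ne'⟩]
  have hp1 : 1 < 1 + 2 * H := by linarith
  have hp5 : 1 + 2 * H < 5 := by linarith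
  have hD2 := renormCosIntegral_two_neg hp1 hp5
  refine ⟨(1 - H) * (2 ^ (2 * H) - 4) / renormCosIntegral (1 + 2 * H) 2,
    div_pos_of_neg_of_neg (one_sub_mul_two_rpow_two_mul_sub_four_neg hH1) hD2,
    fun s t hs ht => ?_⟩
  have key := two_rpow_sub_four_mul_integral_one_sub_cos_mul_one_sub_cos_div hp1 hp5 hs ht
  rw [add_sub_cancel_left] at key
  rw [div_mul_eq_mul_div ((1 - H) * _), mul_assoc, key, eq_div_iff hD2.ne]
  ring
end

section
/- Let 0 < α < 1 and s,t ≥ 0, and let ψ_t = 1_{[0,t]}. Then (1/π) ∫_ℝ ψ̂_t(x) conj(ψ̂_s(x)) |x|^α dx = K (s^{1-α} + t^{1-α} - |t-s|^{1-α}) for some constant K > 0 depending only on α, where ψ̂_t(x) = ∫_ℝ e^{ixy} ψ_t(y) dy. -/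
/-! For `x ≠ 0` one has `ψ̂_t(x) = (e^{itx} - 1)/(ix)`, hence
`Re (ψ̂_t(x) conj ψ̂_s(x)) |x|^α = ((1 - cos tx) + (1 - cos sx) - (1 - cos (t-s)x)) |x|^{α-2}`,
while the imaginary part is odd in `x` (`ψ̂(-x) = conj ψ̂(x)`) and integrates to zero.
The substitution `x ↦ x/u` gives
`∫ (1 - cos ux) |x|^{α-2} dx = |u|^{1-α} ∫ (1 - cos x) |x|^{α-2} dx`, and the last integral
is finite and positive for `-1 < α < 1`: near `0` the integrand is `O(|x|^α)`, at infinity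
`O(|x|^{α-2})`. So `K = (1/π) ∫ (1 - cos x) |x|^{α-2} dx`. -/

open MeasureTheory Real

/-- `ψ_t = 1_{[0,t]}`. -/
noncomputable def psiInd (t : ℝ) : ℝ → ℝ :=
  fun y => Set.indicator (Set.Icc 0 t) (fun _ => (1:ℝ)) y

/-- Fourier transform with the convention `f̂(x) = ∫ e^{ixy} f(y) dy`. -/
noncomputable def hatF (f : ℝ → ℝ) (x : ℝ) : ℂ :=
  ∫ y : ℝ, Complex.exp (Complex.I * x * y) * (f y : ℂ)

open ComplexConjugate

theorem Function.Even.integrable_of_integrableOn_Ioi {E : Type*} [NormedAddCommGroup E]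
    {g : ℝ → E} (heven : Function.Even g) (h : IntegrableOn g (Set.Ioi 0)) : Integrable g := by
  have hneg : IntegrableOn g (Set.Iio 0) := by
    have := (neg_zero (G := ℝ) ▸ h).comp_neg_Iio (c := (0 : ℝ))
    rwa [funext heven] at this
  rw [← integrableOn_univ, ← Set.Iio_union_Ici]
  exact hneg.union ((integrableOn_Ici_iff_integrableOn_Ioi).2 h)

theorem integral_eq_ofReal_integral_re_of_conj_eq_comp_neg {G : ℝ → ℂ} (hG : Integrable G)
    (hconj : ∀ x, conj (G x) = G (-x)) : ∫ x, G x = ((∫ x, (G x).re : ℝ) : ℂ) := by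
  have hreal : conj (∫ x, G x) = ∫ x, G x := by
    rw [← integral_conj, funext hconj, integral_neg_eq_self G volume]
  rw [← Complex.conj_eq_iff_re.1 hreal, ← RCLike.re_to_complex, ← integral_re hG]
  rfl

theorem norm_exp_mul_I_sub_one_sq (θ : ℝ) :
    ‖Complex.exp (θ * Complex.I) - 1‖ ^ 2 = 2 * (1 - cos θ) := by
  rw [Complex.sq_norm, Complex.normSq_apply]
  simp only [Complex.sub_re, Complex.sub_im, Complex.exp_ofReal_mul_I_re,
    Complex.exp_ofReal_mul_I_im, Complex.one_re, Complex.one_im]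
  linear_combination sin_sq_add_cos_sq θ

/-- `(1 - cos ux) |x|^{α-2}`; at `x = 0` the division by `x ^ 2 = 0` makes it `0`. -/
noncomputable def oneSubCosWeight (α u x : ℝ) : ℝ := (1 - cos (u * x)) * (|x| ^ α / x ^ 2)

namespace oneSubCosWeight

variable {α : ℝ}

theorem nonneg (α u x : ℝ) : 0 ≤ oneSubCosWeight α u x :=
  mul_nonneg (by linarith [cos_le_one (u * x)]) (by positivity)

theorem even (α u : ℝ) : Function.Even (oneSubCosWeight α u) := by
  intro x
  simp [oneSubCosWeight, abs_neg]

theorem le_rpow (α x : ℝ) : oneSubCosWeight α 1 x ≤ |x| ^ α / 2 := by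
  rcases eq_or_ne x 0 with rfl | hx
  · simp [oneSubCosWeight]; positivity
  calc oneSubCosWeight α 1 x ≤ x ^ 2 / 2 * (|x| ^ α / x ^ 2) := by
        rw [oneSubCosWeight, one_mul]
        gcongr
        linarith [one_sub_sq_div_two_le_cos (x := x)]
    _ = |x| ^ α / 2 := by field_simp

theorem le_rpow_sub_two (α : ℝ) {x : ℝ} (hx : 0 < x) :
    oneSubCosWeight α 1 x ≤ 2 * x ^ (α - 2) := by
  rw [oneSubCosWeight, one_mul, abs_of_pos hx, rpow_sub hx, rpow_two]
  gcongr
  linarith [neg_one_le_cos x]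

theorem integrable_one (hα : α ∈ Set.Ioo (-1) 1) : Integrable (oneSubCosWeight α 1) := by
  have hmeas : AEStronglyMeasurable (oneSubCosWeight α 1) := by
    unfold oneSubCosWeight; fun_prop
  refine (even α 1).integrable_of_integrableOn_Ioi ?_
  rw [← Set.Ioc_union_Ioi_eq_Ioi zero_le_one]
  refine IntegrableOn.union ?_ ?_
  · have hmaj : IntegrableOn (fun x : ℝ => x ^ α / 2) (Set.Ioc 0 1) :=
      ((intervalIntegral.intervalIntegrable_rpow' hα.1).1).div_const 2
    refine hmaj.mono' hmeas.restrict ?_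
    filter_upwards [ae_restrict_mem measurableSet_Ioc] with x hx
    rw [norm_of_nonneg (nonneg α 1 x)]
    exact (le_rpow α x).trans_eq (by rw [abs_of_pos hx.1])
  · have hmaj : IntegrableOn (fun x : ℝ => 2 * x ^ (α - 2)) (Set.Ioi 1) :=
      (integrableOn_Ioi_rpow_of_lt (by linarith [hα.2]) one_pos).const_mul 2
    refine hmaj.mono' hmeas.restrict ?_
    filter_upwards [ae_restrict_mem measurableSet_Ioi] with x hx
    rw [norm_of_nonneg (nonneg α 1 x)]
    exact le_rpow_sub_two α (zero_lt_one.trans hx)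

theorem eq_rpow_mul_comp_mul {u : ℝ} (hu : u ≠ 0) (α x : ℝ) :
    oneSubCosWeight α u x = |u| ^ (2 - α) * oneSubCosWeight α 1 (u * x) := by
  rcases eq_or_ne x 0 with rfl | hx
  · simp [oneSubCosWeight]
  have hu' : 0 < |u| := abs_pos.2 hu
  have hsq : |u| ^ (2 - α) * |u| ^ α = u ^ 2 := by
    rw [← rpow_add hu', sub_add_cancel, rpow_two, sq_abs]
  rw [oneSubCosWeight, oneSubCosWeight, one_mul, abs_mul, mul_rpow hu'.le (abs_nonneg x)]
  field_simp
  linear_combination (-(1 - cos (u * x))) * hsq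

theorem integrable (hα : α ∈ Set.Ioo (-1) 1) (u : ℝ) :
    Integrable (oneSubCosWeight α u) := by
  rcases eq_or_ne u 0 with rfl | hu
  · have : oneSubCosWeight α 0 = 0 := funext fun x => by simp [oneSubCosWeight]
    exact this ▸ integrable_zero ℝ ℝ volume
  rw [funext (eq_rpow_mul_comp_mul hu α)]
  exact ((integrable_one hα).comp_mul_left' hu).const_mul _

theorem integral_eq (hα : α < 1) (u : ℝ) :
    ∫ x, oneSubCosWeight α u x = |u| ^ (1 - α) * ∫ x, oneSubCosWeight α 1 x := by
  rcases eq_or_ne u 0 with rfl | hu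
  · simp [oneSubCosWeight, zero_rpow (sub_pos.2 hα).ne']
  have hu' : 0 < |u| := abs_pos.2 hu
  rw [funext (eq_rpow_mul_comp_mul hu α), integral_const_mul,
    Measure.integral_comp_mul_left (oneSubCosWeight α 1), smul_eq_mul, ← mul_assoc, abs_inv,
    ← rpow_neg_one, ← rpow_add hu', show 2 - α + -1 = 1 - α by ring]

theorem integral_one_pos (hα : α ∈ Set.Ioo (-1) 1) : 0 < ∫ x, oneSubCosWeight α 1 x := by
  rw [integral_pos_iff_support_of_nonneg (nonneg α 1) (integrable_one hα)]
  have hsupp : Set.Ioo 0 π ⊆ Function.support (oneSubCosWeight α 1) := by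
    rintro x ⟨hx₀, hxπ⟩
    have hcos : cos x < 1 := by
      simpa using cos_lt_cos_of_nonneg_of_le_pi le_rfl hxπ.le hx₀
    have : 0 < |x| := abs_pos.2 hx₀.ne'
    exact (mul_pos (by rw [one_mul]; linarith) (by positivity)).ne'
  exact (by simp [pi_pos] : (0 : ENNReal) < volume (Set.Ioo 0 π)).trans_le (measure_mono hsupp)

theorem integral_add_sub (hα : α ∈ Set.Ioo (-1) 1) (s t : ℝ) :
    ∫ x, (oneSubCosWeight α t x + oneSubCosWeight α s x - oneSubCosWeight α (t - s) x)
      = (|t| ^ (1 - α) + |s| ^ (1 - α) - |t - s| ^ (1 - α)) * ∫ x, oneSubCosWeight α 1 x := by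
  have hts : Integrable fun x => oneSubCosWeight α t x + oneSubCosWeight α s x :=
    (integrable hα t).add (integrable hα s)
  rw [integral_sub hts (integrable hα (t - s)), integral_add (integrable hα t) (integrable hα s),
    integral_eq hα.2 t, integral_eq hα.2 s, integral_eq hα.2 (t - s)]
  ring

end oneSubCosWeight

theorem hatF_neg (f : ℝ → ℝ) (x : ℝ) : hatF f (-x) = conj (hatF f x) := by
  rw [hatF, hatF, ← integral_conj]
  congr 1 with y
  rw [map_mul, Complex.conj_ofReal, ← Complex.exp_conj]
  simp

theorem continuous_hatF {f : ℝ → ℝ} (hf : Integrable f) : Continuous (hatF f) := by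
  refine continuous_of_dominated (bound := fun y => ‖f y‖) (fun x => ?_) (fun x => ?_)
    hf.norm (.of_forall fun y => by fun_prop)
  · have hexp : Continuous fun y : ℝ => Complex.exp (Complex.I * x * y) := by fun_prop
    exact hexp.aestronglyMeasurable.mul (Complex.continuous_ofReal.comp_aestronglyMeasurable hf.1)
  · exact .of_forall fun y => by simp [Complex.norm_exp]

theorem integrable_psiInd (t : ℝ) : Integrable (psiInd t) :=
  (integrable_indicator_iff measurableSet_Icc).2 (integrableOn_const (by simp))

theorem hatF_psiInd {t x : ℝ} (ht : 0 ≤ t) (hx : x ≠ 0) :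
    hatF (psiInd t) x = (Complex.exp (Complex.I * x * t) - 1) / (Complex.I * x) := by
  have hIx : Complex.I * x ≠ 0 := mul_ne_zero Complex.I_ne_zero (Complex.ofReal_ne_zero.2 hx)
  have hind : (fun y : ℝ => Complex.exp (Complex.I * x * y) * (psiInd t y : ℂ))
      = (Set.Icc 0 t).indicator fun y : ℝ => Complex.exp (Complex.I * x * y) := by
    ext y
    by_cases hy : y ∈ Set.Icc 0 t <;> simp [psiInd, hy]
  rw [hatF, hind, integral_indicator measurableSet_Icc, integral_Icc_eq_integral_Ioc,
    ← intervalIntegral.integral_of_le ht, integral_exp_mul_complex hIx]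
  simp

theorem norm_sq_hatF_psiInd {t x : ℝ} (ht : 0 ≤ t) (hx : x ≠ 0) :
    ‖hatF (psiInd t) x‖ ^ 2 = 2 * (1 - cos (t * x)) / x ^ 2 := by
  rw [hatF_psiInd ht hx, norm_div, div_pow, norm_mul, Complex.norm_I, one_mul,
    Complex.norm_real, norm_eq_abs, sq_abs, show Complex.I * x * t = ↑(t * x) * Complex.I by
      push_cast; ring, norm_exp_mul_I_sub_one_sq]

theorem re_hatF_psiInd_mul_conj {s t x : ℝ} (hs : 0 ≤ s) (ht : 0 ≤ t) (hx : x ≠ 0) :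
    (hatF (psiInd t) x * conj (hatF (psiInd s) x)).re
      = ((1 - cos (t * x)) + (1 - cos (s * x)) - (1 - cos ((t - s) * x))) / x ^ 2 := by
  have hprod : hatF (psiInd t) x * conj (hatF (psiInd s) x)
      = (Complex.exp (↑(t * x) * Complex.I) - 1) * (Complex.exp (↑(-(s * x)) * Complex.I) - 1)
        / ((x ^ 2 : ℝ) : ℂ) := by
    rw [hatF_psiInd ht hx, hatF_psiInd hs hx, map_div₀, map_sub, map_one, ← Complex.exp_conj,
      div_mul_div_comm]
    simp only [map_mul, Complex.conj_I, Complex.conj_ofReal]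
    push_cast
    congr 1
    · ring_nf
    · linear_combination (-(x : ℂ) ^ 2) * Complex.I_sq
  rw [hprod, Complex.div_ofReal_re]
  simp only [Complex.mul_re, Complex.sub_re, Complex.sub_im, Complex.exp_ofReal_mul_I_re,
    Complex.exp_ofReal_mul_I_im, Complex.one_re, Complex.one_im]
  rw [show (t - s) * x = t * x - s * x by ring, cos_sub, cos_neg, sin_neg]
  ring

section integrand

variable {α s t : ℝ}

theorem re_hatF_psiInd_mul_conj_mul_rpow (hα : α ≠ 0) (hs : 0 ≤ s) (ht : 0 ≤ t) (x : ℝ) :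
    (hatF (psiInd t) x * conj (hatF (psiInd s) x) * ((|x| ^ α : ℝ) : ℂ)).re
      = oneSubCosWeight α t x + oneSubCosWeight α s x - oneSubCosWeight α (t - s) x := by
  rcases eq_or_ne x 0 with rfl | hx
  · simp [oneSubCosWeight, zero_rpow hα]
  rw [Complex.re_mul_ofReal, re_hatF_psiInd_mul_conj hs ht hx]
  simp only [oneSubCosWeight]
  ring

theorem norm_hatF_psiInd_mul_conj_mul_rpow_le (hα : α ≠ 0) (hs : 0 ≤ s) (ht : 0 ≤ t) (x : ℝ) :
    ‖hatF (psiInd t) x * conj (hatF (psiInd s) x) * ((|x| ^ α : ℝ) : ℂ)‖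
      ≤ oneSubCosWeight α t x + oneSubCosWeight α s x := by
  rcases eq_or_ne x 0 with rfl | hx
  · simp [oneSubCosWeight, zero_rpow hα]
  have hw : 0 ≤ |x| ^ α := by positivity
  rw [norm_mul, norm_mul, RCLike.norm_conj, Complex.norm_real, norm_of_nonneg hw]
  calc ‖hatF (psiInd t) x‖ * ‖hatF (psiInd s) x‖ * |x| ^ α
      ≤ (‖hatF (psiInd t) x‖ ^ 2 + ‖hatF (psiInd s) x‖ ^ 2) / 2 * |x| ^ α := by
        gcongr
        nlinarith [sq_nonneg (‖hatF (psiInd t) x‖ - ‖hatF (psiInd s) x‖)]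
    _ = oneSubCosWeight α t x + oneSubCosWeight α s x := by
        rw [norm_sq_hatF_psiInd ht hx, norm_sq_hatF_psiInd hs hx, oneSubCosWeight,
          oneSubCosWeight]
        ring

theorem integrable_hatF_psiInd_mul_conj_mul_rpow (hα : α ∈ Set.Ioo 0 1) (hs : 0 ≤ s)
    (ht : 0 ≤ t) :
    Integrable fun x : ℝ => hatF (psiInd t) x * conj (hatF (psiInd s) x) * ((|x| ^ α : ℝ) : ℂ) := by
  have hα' : α ∈ Set.Ioo (-1) 1 := ⟨by linarith [hα.1], hα.2⟩
  have hcont : Continuous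
      fun x : ℝ => hatF (psiInd t) x * conj (hatF (psiInd s) x) * ((|x| ^ α : ℝ) : ℂ) := by
    have := continuous_hatF (integrable_psiInd t)
    have := continuous_hatF (integrable_psiInd s)
    fun_prop (disch := exact hα.1.le)
  exact ((oneSubCosWeight.integrable hα' t).add (oneSubCosWeight.integrable hα' s)).mono'
    hcont.aestronglyMeasurable (.of_forall (norm_hatF_psiInd_mul_conj_mul_rpow_le hα.1.ne' hs ht))

end integrand

theorem stmt3 (α : ℝ) (hα : α ∈ Set.Ioo (0:ℝ) 1) :
    ∃ K : ℝ, 0 < K ∧ ∀ s t : ℝ, 0 ≤ s → 0 ≤ t →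
      ((1/Real.pi : ℝ) : ℂ) *
        ∫ x : ℝ, hatF (psiInd t) x * (starRingEnd ℂ) (hatF (psiInd s) x) * (|x| ^ α : ℝ)
      = ((K * (s ^ (1-α) + t ^ (1-α) - |t - s| ^ (1-α)) : ℝ) : ℂ) := by
  have hα' : α ∈ Set.Ioo (-1) 1 := ⟨by linarith [hα.1], hα.2⟩
  refine ⟨(∫ x, oneSubCosWeight α 1 x) / π, div_pos (oneSubCosWeight.integral_one_pos hα') pi_pos,
    fun s t hs ht => ?_⟩
  rw [integral_eq_ofReal_integral_re_of_conj_eq_comp_neg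
      (integrable_hatF_psiInd_mul_conj_mul_rpow hα hs ht) (fun x => by simp [hatF_neg]),
    funext (re_hatF_psiInd_mul_conj_mul_rpow hα.1.ne' hs ht),
    oneSubCosWeight.integral_add_sub hα' s t, abs_of_nonneg hs, abs_of_nonneg ht]
  push_cast
  field_simp
  ring
end

section
/- Let 0 < α < 1 and s,t ≥ 0, and let ψ_t = 1_{[-t,t]}. Then ∫_ℝ ψ̂_t(x) conj(ψ̂_s(x)) |x|^α dx = K ((s+t)^{1-α} - |t-s|^{1-α}) for some constant K > 0 depending only on α, where ψ̂_t(x) = ∫_ℝ e^{ixy} ψ_t(y) dy. -/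
/-!
For `x ≠ 0` one has `ψ̂_t(x) = 2 sin(tx)/x`, and the product-to-sum formula
`4 sin(tx) sin(sx) = 2 ((1 - cos((s+t)x)) - (1 - cos((t-s)x)))` writes the integrand as
`2 (k_{s+t}(|x|) - k_{t-s}(|x|))` with `k_a(x) = (1 - cos(ax)) x^(α-2)`.
For `-1 < α < 1` each `k_a` is integrable on `(0, ∞)` (like `x^α` near `0`, like `x^(α-2)` at `∞`),
and the substitution `x ↦ |a| x` gives `∫₀^∞ k_a = |a|^(1-α) ∫₀^∞ k_1`. By evenness the claim
follows with `K = 4 ∫₀^∞ k_1`, which is positive since `k_1 > 0` on `(0, π)`.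
-/

open MeasureTheory Real

/-- `ψ_t = 1_{[-t,t]}`. -/
noncomputable def psiEven (t : ℝ) : ℝ → ℝ :=
  fun y => Set.indicator (Set.Icc (-t) t) (fun _ => (1:ℝ)) y

open Set

noncomputable def cosKernel (α a x : ℝ) : ℝ := (1 - cos (a * x)) * x ^ (α - 2)

section cosKernel

variable {α : ℝ}

lemma cosKernel_nonneg (α a : ℝ) {x : ℝ} (hx : 0 ≤ x) : 0 ≤ cosKernel α a x :=
  mul_nonneg (sub_nonneg.2 (cos_le_one _)) (rpow_nonneg hx _)

lemma measurable_cosKernel (α a : ℝ) : Measurable (cosKernel α a) := by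
  unfold cosKernel
  fun_prop

lemma cosKernel_abs (α a x : ℝ) : cosKernel α |a| x = cosKernel α a x := by
  rcases abs_choice a with h | h <;> simp [cosKernel, h]

lemma cosKernel_mul_eq {a x : ℝ} (ha : 0 < a) (hx : 0 ≤ x) :
    cosKernel α a x = a ^ (2 - α) * cosKernel α 1 (a * x) := by
  have hpow : a ^ (2 - α) * a ^ (α - 2) = 1 := by
    rw [← rpow_add ha]
    norm_num
  rw [cosKernel, cosKernel, one_mul, mul_rpow ha.le hx]
  linear_combination (-(1 - cos (a * x)) * x ^ (α - 2)) * hpow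

lemma integrableOn_Ioc_cosKernel (hα : -1 < α) (a : ℝ) :
    IntegrableOn (cosKernel α a) (Ioc 0 1) := by
  refine ((intervalIntegral.intervalIntegrable_rpow' hα).1.const_mul (a ^ 2 / 2)).mono'
    (measurable_cosKernel α a).aestronglyMeasurable ?_
  filter_upwards [ae_restrict_mem measurableSet_Ioc] with x hx
  rw [norm_of_nonneg (cosKernel_nonneg α a hx.1.le)]
  have hcos : 1 - cos (a * x) ≤ (a * x) ^ 2 / 2 := by
    linarith [one_sub_sq_div_two_le_cos (x := a * x)]
  calc cosKernel α a x ≤ (a * x) ^ 2 / 2 * x ^ (α - 2) :=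
        mul_le_mul_of_nonneg_right hcos (rpow_nonneg hx.1.le _)
    _ = a ^ 2 / 2 * x ^ α := by
        have := hx.1.ne'
        rw [rpow_sub hx.1, rpow_two]
        field_simp

lemma integrableOn_Ioi_one_cosKernel (hα : α < 1) (a : ℝ) :
    IntegrableOn (cosKernel α a) (Ioi 1) := by
  refine ((integrableOn_Ioi_rpow_of_lt (a := α - 2) (by linarith) one_pos).const_mul 2).mono'
    (measurable_cosKernel α a).aestronglyMeasurable ?_
  filter_upwards [ae_restrict_mem measurableSet_Ioi] with x hx
  have hx0 : 0 ≤ x := zero_le_one.trans hx.le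
  rw [norm_of_nonneg (cosKernel_nonneg α a hx0)]
  exact mul_le_mul_of_nonneg_right (by linarith [neg_one_le_cos (a * x)]) (rpow_nonneg hx0 _)

lemma integrableOn_cosKernel (hα : α ∈ Ioo (-1) 1) (a : ℝ) :
    IntegrableOn (cosKernel α a) (Ioi 0) := by
  rw [← Ioc_union_Ioi_eq_Ioi zero_le_one]
  exact (integrableOn_Ioc_cosKernel hα.1 a).union (integrableOn_Ioi_one_cosKernel hα.2 a)

lemma setIntegral_cosKernel (hα : α < 1) (a : ℝ) :
    ∫ x in Ioi 0, cosKernel α a x = |a| ^ (1 - α) * ∫ x in Ioi 0, cosKernel α 1 x := by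
  simp_rw [← cosKernel_abs α a]
  rcases (abs_nonneg a).eq_or_lt with h | h
  · simp [← h, cosKernel, zero_rpow (by linarith : 1 - α ≠ 0)]
  calc ∫ x in Ioi 0, cosKernel α |a| x
      = ∫ x in Ioi 0, |a| ^ (2 - α) * cosKernel α 1 (|a| * x) :=
        setIntegral_congr_fun measurableSet_Ioi fun x hx => cosKernel_mul_eq h (le_of_lt hx)
    _ = |a| ^ (2 - α) * (|a|⁻¹ * ∫ x in Ioi 0, cosKernel α 1 x) := by
        rw [integral_const_mul, integral_comp_mul_left_Ioi _ _ h, mul_zero, smul_eq_mul]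
    _ = |a| ^ (1 - α) * ∫ x in Ioi 0, cosKernel α 1 x := by
        rw [← mul_assoc, ← rpow_neg_one, ← rpow_add h, show 2 - α + -1 = 1 - α by ring]

lemma setIntegral_cosKernel_one_pos (hα : α ∈ Ioo (-1) 1) :
    0 < ∫ x in Ioi 0, cosKernel α 1 x := by
  rw [setIntegral_pos_iff_support_of_nonneg_ae _ (integrableOn_cosKernel hα 1)]
  · refine ((Measure.measure_Ioo_pos volume).2 pi_pos).trans_le
      (measure_mono fun x hx => ⟨?_, hx.1⟩)
    have hcos : cos x < cos 0 := cos_lt_cos_of_nonneg_of_le_pi le_rfl hx.2.le hx.1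
    rw [cos_zero] at hcos
    exact (mul_pos (by simpa using hcos) (rpow_pos_of_pos hx.1 _)).ne'
  · filter_upwards [ae_restrict_mem measurableSet_Ioi] with x hx
    exact cosKernel_nonneg α 1 hx.le

end cosKernel

lemma hatF_psiEven {t x : ℝ} (ht : 0 ≤ t) (hx : x ≠ 0) :
    hatF (psiEven t) x = ((2 * sin (t * x) / x : ℝ) : ℂ) := by
  have hxc : (x : ℂ) ≠ 0 := by exact_mod_cast hx
  have hindicator : ∀ y : ℝ, Complex.exp (Complex.I * x * y) * ((psiEven t y : ℝ) : ℂ)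
      = (Icc (-t) t).indicator (fun y : ℝ => Complex.exp ((Complex.I * x) * y)) y := by
    intro y
    by_cases hy : y ∈ Icc (-t) t <;> simp [psiEven, hy]
  rw [hatF]
  simp_rw [hindicator]
  rw [integral_indicator measurableSet_Icc, integral_Icc_eq_integral_Ioc,
    ← intervalIntegral.integral_of_le (by linarith : -t ≤ t),
    integral_exp_mul_complex (mul_ne_zero Complex.I_ne_zero hxc)]
  have e1 : Complex.I * x * t = ((x * t : ℝ) : ℂ) * Complex.I := by push_cast; ring
  have e2 : Complex.I * x * (-t : ℝ) = (-(x * t : ℝ) : ℂ) * Complex.I := by push_cast; ring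
  rw [e1, e2, Complex.exp_mul_I, Complex.exp_mul_I, Complex.cos_neg, Complex.sin_neg]
  push_cast
  field_simp
  ring

lemma cos_mul_abs (a x : ℝ) : cos (a * |x|) = cos (a * x) := by
  rcases abs_choice x with h | h <;> simp [h]

lemma hatF_psiEven_mul_conj_mul_rpow {s t x : ℝ} (hs : 0 ≤ s) (ht : 0 ≤ t) (hx : x ≠ 0) (α : ℝ) :
    hatF (psiEven t) x * (starRingEnd ℂ) (hatF (psiEven s) x) * ((|x| ^ α : ℝ) : ℂ)
      = ((2 * (cosKernel α (s + t) |x| - cosKernel α (t - s) |x|) : ℝ) : ℂ) := by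
  rw [hatF_psiEven ht hx, hatF_psiEven hs hx, Complex.conj_ofReal, ← Complex.ofReal_mul,
    ← Complex.ofReal_mul]
  congr 1
  have hpow : |x| ^ α = |x| ^ (α - 2) * x ^ 2 := by
    rw [rpow_sub (abs_pos.2 hx), rpow_two, sq_abs]
    field_simp
  simp only [cosKernel, cos_mul_abs, hpow]
  simp only [add_mul, sub_mul, cos_add, cos_sub]
  field_simp
  ring

theorem stmt4 (α : ℝ) (hα : α ∈ Set.Ioo (0:ℝ) 1) :
    ∃ K : ℝ, 0 < K ∧ ∀ s t : ℝ, 0 ≤ s → 0 ≤ t →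
      (∫ x : ℝ, hatF (psiEven t) x * (starRingEnd ℂ) (hatF (psiEven s) x) * (|x| ^ α : ℝ))
      = ((K * ((s + t) ^ (1-α) - |t - s| ^ (1-α)) : ℝ) : ℂ) := by
  have hα' : α ∈ Ioo (-1) 1 := ⟨by linarith [hα.1], hα.2⟩
  refine ⟨4 * ∫ x in Ioi 0, cosKernel α 1 x,
    mul_pos four_pos (setIntegral_cosKernel_one_pos hα'), fun s t hs ht => ?_⟩
  have hae : (fun x : ℝ => hatF (psiEven t) x * (starRingEnd ℂ) (hatF (psiEven s) x)
      * ((|x| ^ α : ℝ) : ℂ)) =ᵐ[volume]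
      fun x => ((2 * (cosKernel α (s + t) |x| - cosKernel α (t - s) |x|) : ℝ) : ℂ) := by
    filter_upwards [Measure.ae_ne volume 0] with x hx
    exact hatF_psiEven_mul_conj_mul_rpow hs ht hx α
  rw [integral_congr_ae hae, integral_complex_ofReal,
    integral_comp_abs (f := fun y => 2 * (cosKernel α (s + t) y - cosKernel α (t - s) y)),
    integral_const_mul, integral_sub (integrableOn_cosKernel hα' _) (integrableOn_cosKernel hα' _),
    setIntegral_cosKernel hα.2 (s + t), setIntegral_cosKernel hα.2 (t - s),
    abs_of_nonneg (add_nonneg hs ht)]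
  push_cast
  ring
end

section
/- Let α ∈ (0,2] and let p_v denote the symmetric α-stable density with p̂_v(x) = e^{-v|x|^α}. For ψ_t = 1_{[0,t]} − 1_{[-t,0]} and α < 3/2, lim_{T→∞} (1/(2πT)) ∫_ℝ ψ̂_s(x) conj(ψ̂_t(x)) ∫_0^T ∫_v^T ∫_v^T e^{-(u+r-2v)|x|^α} dr du dv dx = (2/π) ∫_ℝ (1−cos tx)(1−cos sx) / |x|^{2+2α} dx. -/
open MeasureTheory Real Filter

/-- `ψ_t = 1_{[0,t]} - 1_{[-t,0]}`. -/
noncomputable def psiSub (t : ℝ) : ℝ → ℝ :=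
  fun y => Set.indicator (Set.Icc 0 t) (fun _ => (1:ℝ)) y
    - Set.indicator (Set.Icc (-t) 0) (fun _ => (1:ℝ)) y

/-!
For `x ≠ 0` the Fourier transforms give `ψ̂_s(x) conj ψ̂_t(x) = 4 (1 - cos sx)(1 - cos tx) / x²`.
With `c = |x|^α` the two inner integrals factor, so the triple integral equals
`c⁻² ∫_0^T (1 - e^{-wc})² dw`. This last integral lies between `T - 2/c` and `T`, so divided by
`T` it is bounded by `1` and tends to `1`, and dominated convergence gives the limit. The dominating
function `(1 - cos tx)(1 - cos sx) / |x|^{2+2α}` behaves like `|x|^{2-2α}` near `0` and like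
`|x|^{-2-2α}` at infinity, so it is integrable exactly because `1 < 2 + 2α < 5`.
-/

open scoped Topology

lemma hatF_psiSub {t : ℝ} (ht : 0 ≤ t) {x : ℝ} (hx : x ≠ 0) :
    hatF (psiSub t) x = ((2 * cos (t * x) - 2 : ℝ) : ℂ) / (Complex.I * x) := by
  set e : ℝ → ℂ := fun y => Complex.exp (Complex.I * x * y)
  have hsplit : (fun y => e y * (psiSub t y : ℂ))
      = fun y => (Set.Icc 0 t).indicator e y - (Set.Icc (-t) 0).indicator e y := by
    ext y
    by_cases h1 : y ∈ Set.Icc 0 t <;> by_cases h2 : y ∈ Set.Icc (-t) 0 <;> simp [psiSub, h1, h2]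
  have he : Continuous e := by fun_prop
  have hIx : Complex.I * x ≠ 0 := mul_ne_zero Complex.I_ne_zero (by exact_mod_cast hx)
  have hint : ∀ a b, Integrable ((Set.Icc a b).indicator e) :=
    fun a b => (integrable_indicator_iff measurableSet_Icc).2 he.integrableOn_Icc
  rw [hatF, hsplit, integral_sub (hint _ _) (hint _ _),
    integral_indicator measurableSet_Icc, integral_indicator measurableSet_Icc,
    integral_Icc_eq_integral_Ioc, integral_Icc_eq_integral_Ioc,
    ← intervalIntegral.integral_of_le ht, ← intervalIntegral.integral_of_le (neg_nonpos.2 ht),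
    integral_exp_mul_complex hIx, integral_exp_mul_complex hIx, div_sub_div_same]
  congr 1
  push_cast
  rw [Complex.cos, show Complex.I * x * (-t) = -(t * x * Complex.I) by ring,
    show Complex.I * x * t = t * x * Complex.I by ring]
  simp only [mul_zero, Complex.exp_zero, neg_mul]
  ring

lemma hatF_psiSub_mul_conj {s t : ℝ} (hs : 0 ≤ s) (ht : 0 ≤ t) {x : ℝ} (hx : x ≠ 0) :
    hatF (psiSub s) x * starRingEnd ℂ (hatF (psiSub t) x)
      = (((2 - 2 * cos (s * x)) * (2 - 2 * cos (t * x)) / x ^ 2 : ℝ) : ℂ) := by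
  rw [hatF_psiSub hs hx, hatF_psiSub ht hx, map_div₀, Complex.conj_ofReal, map_mul,
    Complex.conj_I, Complex.conj_ofReal]
  push_cast
  field_simp
  ring_nf
  rw [Complex.I_sq]
  ring

noncomputable def tripleExpIntegral (c T : ℝ) : ℝ :=
  ∫ v in (0:ℝ)..T, ∫ u in v..T, ∫ r in v..T, exp (-((u + r - 2 * v) * c))

noncomputable def oneSubExpSqIntegral (c T : ℝ) : ℝ :=
  ∫ w in (0:ℝ)..T, (1 - exp (-(w * c))) ^ 2

lemma integral_exp_neg_mul {c : ℝ} (hc : c ≠ 0) (a b : ℝ) :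
    ∫ r in a..b, exp (-(r * c)) = (exp (-(a * c)) - exp (-(b * c))) / c := by
  have hderiv : ∀ r ∈ Set.uIcc a b,
      HasDerivAt (fun r => -exp (-(r * c)) / c) (exp (-(r * c))) r := by
    intro r _
    refine ((hasDerivAt_mul_const c).neg.exp.neg.div_const c).congr_deriv ?_
    field_simp
    simp [mul_comm]
  rw [intervalIntegral.integral_eq_sub_of_hasDerivAt hderiv
    ((by fun_prop : Continuous fun r => exp (-(r * c))).intervalIntegrable _ _)]
  ring

lemma tripleExpIntegral_eq {c : ℝ} (hc : c ≠ 0) (T : ℝ) :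
    tripleExpIntegral c T = oneSubExpSqIntegral c T / c ^ 2 := by
  have shifted : ∀ v, ∫ r in v..T, exp (-((r - v) * c)) = (1 - exp (-((T - v) * c))) / c := by
    intro v
    rw [intervalIntegral.integral_comp_sub_right (fun r => exp (-(r * c))), integral_exp_neg_mul hc]
    simp
  have inner : ∀ v, ∫ u in v..T, ∫ r in v..T, exp (-((u + r - 2 * v) * c))
      = ((1 - exp (-((T - v) * c))) / c) ^ 2 := by
    intro v
    have split : ∀ u r,
        exp (-((u + r - 2 * v) * c)) = exp (-((u - v) * c)) * exp (-((r - v) * c)) := by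
      intro u r; rw [← exp_add]; ring_nf
    simp only [split, intervalIntegral.integral_const_mul, intervalIntegral.integral_mul_const,
      shifted]
    ring
  rw [tripleExpIntegral, funext inner, oneSubExpSqIntegral]
  simp only [div_pow]
  rw [intervalIntegral.integral_div,
    intervalIntegral.integral_comp_sub_left (fun w => (1 - exp (-(w * c))) ^ 2) T]
  simp

lemma oneSubExpSqIntegral_nonneg (c : ℝ) {T : ℝ} (hT : 0 ≤ T) :
    0 ≤ oneSubExpSqIntegral c T :=
  intervalIntegral.integral_nonneg hT fun _ _ => sq_nonneg _

lemma oneSubExpSqIntegral_le {c T : ℝ} (hc : 0 ≤ c) (hT : 0 ≤ T) :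
    oneSubExpSqIntegral c T ≤ T := by
  calc oneSubExpSqIntegral c T ≤ ∫ _ in (0:ℝ)..T, (1 : ℝ) := by
        refine intervalIntegral.integral_mono_on hT
          ((by fun_prop : Continuous fun w => (1 - exp (-(w * c))) ^ 2).intervalIntegrable _ _)
          (by simp) fun w hw => ?_
        have : exp (-(w * c)) ≤ 1 := exp_le_one_iff.2 (by nlinarith [hw.1])
        nlinarith [exp_pos (-(w * c))]
    _ = T := by simp

lemma sub_two_div_le_oneSubExpSqIntegral {c T : ℝ} (hc : 0 < c) (hT : 0 ≤ T) :
    T - 2 / c ≤ oneSubExpSqIntegral c T := by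
  calc T - 2 / c ≤ T - 2 * ((exp (-(0 * c)) - exp (-(T * c))) / c) := by
        simp only [zero_mul, neg_zero, exp_zero, ← mul_div_assoc]
        gcongr
        linarith [exp_pos (-(T * c))]
    _ = ∫ w in (0:ℝ)..T, (1 - 2 * exp (-(w * c))) := by
        rw [intervalIntegral.integral_sub (by simp)
          ((by fun_prop : Continuous fun w => 2 * exp (-(w * c))).intervalIntegrable _ _),
          intervalIntegral.integral_const_mul, integral_exp_neg_mul hc.ne']
        simp
    _ ≤ oneSubExpSqIntegral c T :=
        intervalIntegral.integral_mono_on hT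
          ((by fun_prop : Continuous fun w => 1 - 2 * exp (-(w * c))).intervalIntegrable _ _)
          ((by fun_prop : Continuous fun w => (1 - exp (-(w * c))) ^ 2).intervalIntegrable _ _)
          fun w _ => by nlinarith [sq_nonneg (exp (-(w * c)))]

lemma tendsto_oneSubExpSqIntegral_div {c : ℝ} (hc : 0 < c) :
    Tendsto (fun T => oneSubExpSqIntegral c T / T) atTop (𝓝 1) := by
  have lower : Tendsto (fun T : ℝ => 1 - 2 / c / T) atTop (𝓝 1) := by
    simpa using (tendsto_const_nhds (x := (1 : ℝ))).sub
      ((tendsto_const_nhds (x := 2 / c)).div_atTop tendsto_id)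
  refine tendsto_of_tendsto_of_tendsto_of_le_of_le' lower tendsto_const_nhds ?_ ?_
  all_goals filter_upwards [eventually_gt_atTop 0] with T hT
  · rw [le_div_iff₀ hT]
    nlinarith [sub_two_div_le_oneSubExpSqIntegral hc hT.le, div_mul_cancel₀ (2 / c) hT.ne']
  · exact (div_le_one hT).2 (oneSubExpSqIntegral_le hc.le hT.le)

lemma continuous_oneSubExpSqIntegral (T : ℝ) : Continuous fun c => oneSubExpSqIntegral c T :=
  intervalIntegral.continuous_parametric_intervalIntegral_of_continuous' (by fun_prop) _ _

lemma one_sub_cos_mul_one_sub_cos_nonneg (s t x : ℝ) :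
    0 ≤ (1 - cos (t * x)) * (1 - cos (s * x)) :=
  mul_nonneg (by linarith [cos_le_one (t * x)]) (by linarith [cos_le_one (s * x)])

lemma one_sub_cos_mul_one_sub_cos_le_four (s t x : ℝ) :
    (1 - cos (t * x)) * (1 - cos (s * x)) ≤ 4 := by
  nlinarith [cos_le_one (t * x), cos_le_one (s * x), neg_one_le_cos (t * x), neg_one_le_cos (s * x)]

lemma one_sub_cos_mul_one_sub_cos_le_pow_four (s t x : ℝ) :
    (1 - cos (t * x)) * (1 - cos (s * x)) ≤ t ^ 2 * s ^ 2 / 4 * x ^ 4 := by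
  have ht : 1 - cos (t * x) ≤ (t * x) ^ 2 / 2 := by
    linarith [one_sub_sq_div_two_le_cos (x := t * x)]
  have hs : 1 - cos (s * x) ≤ (s * x) ^ 2 / 2 := by
    linarith [one_sub_sq_div_two_le_cos (x := s * x)]
  calc (1 - cos (t * x)) * (1 - cos (s * x)) ≤ (t * x) ^ 2 / 2 * ((s * x) ^ 2 / 2) :=
        mul_le_mul ht hs (by linarith [cos_le_one (s * x)]) (by positivity)
    _ = t ^ 2 * s ^ 2 / 4 * x ^ 4 := by ring

lemma integrable_one_sub_cos_mul_one_sub_cos_div_abs_rpow {p : ℝ} (hp1 : 1 < p) (hp5 : p < 5)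
    (s t : ℝ) : Integrable fun x : ℝ => (1 - cos (t * x)) * (1 - cos (s * x)) / |x| ^ p := by
  set f := fun x : ℝ => (1 - cos (t * x)) * (1 - cos (s * x)) / |x| ^ p
  have hf_nonneg : ∀ x, 0 ≤ f x := fun x =>
    div_nonneg (one_sub_cos_mul_one_sub_cos_nonneg s t x) (by positivity)
  have hmeas : AEStronglyMeasurable f := by
    refine Measurable.aestronglyMeasurable ?_
    fun_prop
  have near_zero : IntegrableOn f (Metric.ball 0 1) := by
    refine integrableOn_ball_of_norm_le_rpow (C := t ^ 2 * s ^ 2 / 4) (α := p - 4) (by simp)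
      (by simp; linarith) (Eventually.of_forall fun x => ?_) hmeas
    rw [Real.norm_of_nonneg (hf_nonneg x), Real.norm_eq_abs, neg_sub]
    rcases eq_or_ne x 0 with rfl | hx
    · simp only [f, mul_zero, cos_zero, sub_self, zero_div]
      positivity
    have hx' : 0 < |x| := abs_pos.2 hx
    calc f x ≤ t ^ 2 * s ^ 2 / 4 * x ^ 4 / |x| ^ p := div_le_div_of_nonneg_right
          (one_sub_cos_mul_one_sub_cos_le_pow_four s t x) (by positivity)
      _ = t ^ 2 * s ^ 2 / 4 * |x| ^ (4 - p) := by
          rw [rpow_sub hx', rpow_ofNat, Even.pow_abs (by decide)]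
          ring
  have away_from_zero : IntegrableOn f (Metric.ball 0 1)ᶜ := by
    have hbound := (integrable_one_add_norm (E := ℝ) (μ := volume) (r := p)
      (by simpa using hp1)).const_mul (4 * 2 ^ p)
    refine Integrable.mono' hbound.integrableOn hmeas.restrict
      (ae_restrict_of_forall_mem measurableSet_ball.compl ?_)
    intro x hx
    have hx1 : 1 ≤ |x| := by simpa using hx
    rw [Real.norm_of_nonneg (hf_nonneg x), Real.norm_eq_abs, rpow_neg (by positivity),
      ← div_eq_mul_inv]
    calc f x ≤ 4 / |x| ^ p :=
          div_le_div_of_nonneg_right (one_sub_cos_mul_one_sub_cos_le_four s t x) (by positivity)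
      _ = 4 * 2 ^ p / (2 * |x|) ^ p := by
          rw [mul_rpow zero_le_two (abs_nonneg x)]
          field_simp
      _ ≤ 4 * 2 ^ p / (1 + |x|) ^ p := by
          gcongr
          linarith
  simpa using near_zero.union away_from_zero

lemma tendsto_integral_mul_oneSubExpSqIntegral_div {X : Type*} [MeasurableSpace X]
    {μ : Measure X} {g c : X → ℝ} (hg : Integrable g μ) (hc : Measurable c)
    (hc0 : ∀ᵐ x ∂μ, 0 < c x) :
    Tendsto (fun T => ∫ x, g x * (oneSubExpSqIntegral (c x) T / T) ∂μ) atTop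
      (𝓝 (∫ x, g x ∂μ)) := by
  refine tendsto_integral_filter_of_dominated_convergence (fun x => ‖g x‖) ?_ ?_ hg.norm ?_
  · exact Eventually.of_forall fun T => hg.aestronglyMeasurable.mul
      (((continuous_oneSubExpSqIntegral T).measurable.comp hc).div_const T).aestronglyMeasurable
  · filter_upwards [eventually_gt_atTop 0] with T hT
    filter_upwards [hc0] with x hx
    rw [norm_mul, Real.norm_of_nonneg (div_nonneg (oneSubExpSqIntegral_nonneg _ hT.le) hT.le)]
    exact mul_le_of_le_one_right (norm_nonneg _)
      ((div_le_one hT).2 (oneSubExpSqIntegral_le hx.le hT.le))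
  · filter_upwards [hc0] with x hx
    simpa using (tendsto_oneSubExpSqIntegral_div hx).const_mul (g x)

lemma abs_rpow_two_add_two_mul {x : ℝ} (hx : x ≠ 0) (α : ℝ) :
    |x| ^ (2 + 2 * α) = x ^ 2 * (|x| ^ α) ^ 2 := by
  rw [rpow_add (abs_pos.2 hx), mul_comm 2 α, rpow_mul (abs_nonneg x), rpow_two, rpow_two, sq_abs]

theorem stmt19 (α : ℝ) (hα : α ∈ Set.Ioc (0:ℝ) 2) (hα' : α < 3/2)
    (s t : ℝ) (hs : 0 ≤ s) (ht : 0 ≤ t) :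
    Filter.Tendsto
      (fun T : ℝ =>
        ((1 / (2 * Real.pi * T) : ℝ) : ℂ) *
          ∫ x : ℝ, hatF (psiSub s) x * (starRingEnd ℂ) (hatF (psiSub t) x) *
            ((∫ v in (0:ℝ)..T, ∫ u in v..T, ∫ r in v..T,
                Real.exp (-((u + r - 2*v) * |x| ^ α)) : ℝ) : ℂ))
      Filter.atTop
      (nhds (((2 / Real.pi) *
        ∫ x : ℝ, (1 - Real.cos (t*x)) * (1 - Real.cos (s*x)) / |x| ^ (2 + 2*α) : ℝ)) ) := by
  have hint := integrable_one_sub_cos_mul_one_sub_cos_div_abs_rpow (p := 2 + 2 * α)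
    (by linarith [hα.1]) (by linarith) s t
  have hlim := tendsto_integral_mul_oneSubExpSqIntegral_div (μ := volume) (c := fun x => |x| ^ α)
    (hint.const_mul (2 / π)) (by fun_prop)
    (by filter_upwards [Measure.ae_ne volume 0] with x hx; positivity)
  rw [integral_const_mul] at hlim
  refine ((Complex.continuous_ofReal.tendsto _).comp hlim).congr' ?_
  filter_upwards [eventually_ne_atTop 0] with T hT
  rw [Function.comp_apply, ← integral_complex_ofReal, ← integral_const_mul]
  refine integral_congr_ae ?_
  filter_upwards [Measure.ae_ne volume 0] with x hx
  change _ = _ * (_ * ((tripleExpIntegral (|x| ^ α) T : ℝ) : ℂ))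
  rw [hatF_psiSub_mul_conj hs ht hx, tripleExpIntegral_eq (by positivity),
    abs_rpow_two_add_two_mul hx]
  push_cast
  field_simp
end
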